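/- arXiv:1709.07296 — 5 statements merged into one kernel-verified Lean document; each statement's English description precedes it below -/
import Mathlib

section
/- Let p, χ, δ, d > 0 satisfy 1 − 2χ/(π(δ + 1/(dδ))) < d·p < 1, and define c(λ) = λ + p/λ − (2χ/π)·arctan(min(λ, 1/√d)/δ) for λ > 0. Then for every λ > 0 one has c(λ) ≥ 1/√d + p√d − (2χ/π)·arctan(1/(√d·δ)), with equality at λ = 1/√d; hence the infimum of c over λ > 0 equals 1/√d + p√d − (2χ/π)·arctan(1/(√d·δ)). -/
/-! Below the truncation level `1/√d` the arctan is not truncated and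
`c'(λ) = 1 - p/λ² - (2χ/π)·δ/(δ² + λ²)` increases with `λ`; its value at `1/√d` is negative
exactly by the lower bound on `d·p`, so `c` decreases on `(0, 1/√d]`. Above `1/√d` the arctan
term is frozen and `λ + p/λ` increases there since `p ≤ 1/d`. So `c` is minimal at `1/√d`. -/

open Real Set

/-- The paper's `c(λ)` with `K = 2χ/π` and truncation level `s = 1/√d`. -/
noncomputable def frontSpeed (p K δ s l : ℝ) : ℝ :=
  l + p / l - K * arctan (min l s / δ)

theorem hasDerivAt_add_div_sub_arctan (p K δ : ℝ) {x : ℝ} (hx : x ≠ 0) (hδ : δ ≠ 0) :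
    HasDerivAt (fun l => l + p / l - K * arctan (l / δ))
      (1 - p / x ^ 2 - K * (δ / (δ ^ 2 + x ^ 2))) x := by
  have hinv : HasDerivAt (fun l => p / l) (p * -(x ^ 2)⁻¹) x := by
    simpa only [div_eq_mul_inv] using (hasDerivAt_inv hx).const_mul p
  have harctan := (hasDerivAt_arctan (x / δ)).comp x ((hasDerivAt_id x).div_const δ)
  refine (((hasDerivAt_id x).add hinv).sub (harctan.const_mul K)).congr_deriv ?_
  field_simp
  ring

theorem strictAntiOn_add_div_sub_arctan {p K δ s : ℝ} (hp : 0 ≤ p) (hK : 0 ≤ K) (hδ : 0 < δ)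
    (hslope : 1 < p / s ^ 2 + K * (δ / (δ ^ 2 + s ^ 2))) :
    StrictAntiOn (fun l => l + p / l - K * arctan (l / δ)) (Ioc 0 s) := by
  have hderiv : ∀ x ∈ Ioc 0 s, HasDerivAt (fun l => l + p / l - K * arctan (l / δ))
      (1 - p / x ^ 2 - K * (δ / (δ ^ 2 + x ^ 2))) x :=
    fun x hx => hasDerivAt_add_div_sub_arctan p K δ hx.1.ne' hδ.ne'
  refine strictAntiOn_of_hasDerivWithinAt_neg (convex_Ioc 0 s)
    (fun x hx => (hderiv x hx).continuousAt.continuousWithinAt)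
    (fun x hx => (hderiv x (interior_subset hx)).hasDerivWithinAt) ?_
  · intro x hx
    rw [interior_Ioc] at hx
    obtain ⟨hx0, hxs⟩ := hx
    have hpx : p / s ^ 2 ≤ p / x ^ 2 := by gcongr
    have hδx : δ / (δ ^ 2 + s ^ 2) ≤ δ / (δ ^ 2 + x ^ 2) := by gcongr
    nlinarith [mul_le_mul_of_nonneg_left hδx hK]

theorem add_div_le_add_div_of_sq_le {p s l : ℝ} (hs : 0 < s) (hsl : s ≤ l) (hp : p ≤ s ^ 2) :
    s + p / s ≤ l + p / l := by
  have hl : 0 < l := hs.trans_le hsl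
  have key : l + p / l - (s + p / s) = (l - s) * (l * s - p) / (l * s) := by
    field_simp
    ring
  have : 0 ≤ (l - s) * (l * s - p) / (l * s) := by
    apply div_nonneg _ (by positivity)
    exact mul_nonneg (by linarith) (by nlinarith)
  linarith

theorem frontSpeed_le {p K δ s : ℝ} (hp : 0 ≤ p) (hK : 0 ≤ K) (hδ : 0 < δ) (hs : 0 < s)
    (hps : p ≤ s ^ 2) (hslope : 1 < p / s ^ 2 + K * (δ / (δ ^ 2 + s ^ 2))) {l : ℝ} (hl : 0 < l) :
    frontSpeed p K δ s s ≤ frontSpeed p K δ s l := by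
  unfold frontSpeed
  rcases le_total l s with hls | hsl
  · rw [min_eq_left hls, min_self]
    exact (strictAntiOn_add_div_sub_arctan hp hK hδ hslope).antitoneOn
      ⟨hl, hls⟩ ⟨hs, le_rfl⟩ hls
  · rw [min_eq_right hsl, min_self]
    linarith [add_div_le_add_div_of_sq_le hs hsl hps]

theorem isLeast_frontSpeed {p K δ s : ℝ} (hp : 0 ≤ p) (hK : 0 ≤ K) (hδ : 0 < δ) (hs : 0 < s)
    (hps : p ≤ s ^ 2) (hslope : 1 < p / s ^ 2 + K * (δ / (δ ^ 2 + s ^ 2))) :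
    IsLeast (frontSpeed p K δ s '' Ioi 0) (frontSpeed p K δ s s) :=
  ⟨mem_image_of_mem _ hs, forall_mem_image.2 fun _ hl => frontSpeed_le hp hK hδ hs hps hslope hl⟩

theorem min_speed_case_intermediate (p χ δ d : ℝ)
    (hp : 0 < p) (hχ : 0 < χ) (hδ : 0 < δ) (hd : 0 < d)
    (hlow : 1 - 2 * χ / (π * (δ + 1 / (d * δ))) < d * p)
    (hup : d * p < 1) :
    (∀ l > 0,
        l + p / l - (2 * χ / π) * arctan (min l (1 / sqrt d) / δ)
          ≥ 1 / sqrt d + p * sqrt d - (2 * χ / π) * arctan (1 / (sqrt d * δ)))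
    ∧ (1 / sqrt d + p / (1 / sqrt d)
        - (2 * χ / π) * arctan (min (1 / sqrt d) (1 / sqrt d) / δ)
        = 1 / sqrt d + p * sqrt d - (2 * χ / π) * arctan (1 / (sqrt d * δ)))
    ∧ IsGLB
        ((fun l => l + p / l - (2 * χ / π) * arctan (min l (1 / sqrt d) / δ)) ''
          Set.Ioi 0)
        (1 / sqrt d + p * sqrt d - (2 * χ / π) * arctan (1 / (sqrt d * δ))) := by
  have hs2 : (1 / sqrt d) ^ 2 = 1 / d := by rw [div_pow, one_pow, sq_sqrt hd.le]
  have hK : 0 ≤ 2 * χ / π := by positivity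
  have hps : p ≤ (1 / sqrt d) ^ 2 := by
    rw [hs2, le_div_iff₀ hd]
    linarith
  have hslope : 1 < p / (1 / sqrt d) ^ 2 + 2 * χ / π * (δ / (δ ^ 2 + (1 / sqrt d) ^ 2)) := by
    have hK_term : 2 * χ / π * (δ / (δ ^ 2 + 1 / d)) = 2 * χ / (π * (δ + 1 / (d * δ))) := by
      field_simp
    rw [hs2, div_div_eq_mul_div, div_one, mul_comm p d, hK_term]
    linarith
  have hvalue : frontSpeed p (2 * χ / π) δ (1 / sqrt d) (1 / sqrt d)
      = 1 / sqrt d + p * sqrt d - (2 * χ / π) * arctan (1 / (sqrt d * δ)) := by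
    unfold frontSpeed
    rw [min_self, div_div, div_div_eq_mul_div, div_one]
  have hleast := isLeast_frontSpeed hp.le hK hδ (by positivity) hps hslope
  rw [hvalue] at hleast
  exact ⟨fun l hl => hleast.2 (mem_image_of_mem _ hl), hvalue, hleast.isGLB⟩
end

section
/- Fix p, χ, d > 0 and for each δ > 0 define m(δ) = inf over λ > 0 of [λ + p/λ − (2χ/π)·arctan(min(λ, 1/√d)/δ)]. Then m(δ) tends to 2√p − χ as δ → 0⁺. -/
/-! For every `δ > 0` and `λ > 0` the speed is at least `2√p - χ`, since `λ + p/λ ≥ 2√p` (AM–GM)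
and `(2χ/π) arctan ≤ χ`. Evaluating at the AM–GM minimiser `λ = √p` gives the upper bound
`2√p - (2χ/π) arctan(min(√p, 1/√d)/δ)`, which tends to `2√p - χ` because the argument of the
arctangent tends to `+∞` as `δ → 0⁺`. -/

open Real Filter Topology

lemma two_sqrt_le_add_div {p l : ℝ} (hp : 0 ≤ p) (hl : 0 < l) : 2 * √p ≤ l + p / l := by
  rw [← sub_nonneg]
  have key : l + p / l - 2 * √p = (l - √p) ^ 2 / l := by
    field_simp
    rw [sub_sq, sq_sqrt hp]
    ring
  rw [key]
  positivity

lemma sqrt_add_div_sqrt (p : ℝ) : √p + p / √p = 2 * √p := by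
  rw [div_sqrt]
  ring

lemma mul_arctan_le {χ : ℝ} (hχ : 0 ≤ χ) (x : ℝ) : 2 * χ / π * arctan x ≤ χ :=
  calc 2 * χ / π * arctan x ≤ 2 * χ / π * (π / 2) := by
        gcongr
        exact (arctan_lt_pi_div_two x).le
    _ = χ := by field_simp

lemma tendsto_mul_arctan_div_nhdsGT_zero (χ : ℝ) {c : ℝ} (hc : 0 < c) :
    Tendsto (fun δ => 2 * χ / π * arctan (c / δ)) (𝓝[>] 0) (𝓝 χ) := by
  have hdiv : Tendsto (fun δ : ℝ => c / δ) (𝓝[>] 0) atTop := by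
    simpa only [div_eq_mul_inv] using tendsto_inv_nhdsGT_zero.const_mul_atTop hc
  have harctan := (tendsto_arctan_atTop.mono_right nhdsWithin_le_nhds).comp hdiv
  have hχ_eq : 2 * χ / π * (π / 2) = χ := by field_simp
  simpa only [hχ_eq, Function.comp_def] using harctan.const_mul (2 * χ / π)

lemma tendsto_sInf_image_of_le_of_tendsto {ι α : Type*} {F : Filter ι} {g : ι → α → ℝ}
    {s : Set α} {a : α} {L : ℝ} (ha : a ∈ s) (hle : ∀ i, ∀ x ∈ s, L ≤ g i x)
    (hlim : Tendsto (fun i => g i a) F (𝓝 L)) :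
    Tendsto (fun i => sInf (g i '' s)) F (𝓝 L) := by
  refine tendsto_of_tendsto_of_tendsto_of_le_of_le tendsto_const_nhds hlim (fun i => ?_)
    (fun i => ?_)
  · exact le_csInf (Set.Nonempty.image _ ⟨a, ha⟩) (Set.forall_mem_image.2 (hle i))
  · exact csInf_le ⟨L, Set.forall_mem_image.2 (hle i)⟩ (Set.mem_image_of_mem _ ha)

theorem min_speed_limit_stiff (p χ d : ℝ)
    (hp : 0 < p) (hχ : 0 < χ) (hd : 0 < d) :
    Tendsto
      (fun δ : ℝ =>
        sInf ((fun l => l + p / l - (2 * χ / π) * arctan (min l (1 / sqrt d) / δ)) ''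
          Set.Ioi 0))
      (nhdsWithin 0 (Set.Ioi 0)) (nhds (2 * sqrt p - χ)) := by
  have hsqrt_p : 0 < √p := sqrt_pos.2 hp
  refine tendsto_sInf_image_of_le_of_tendsto
    (g := fun δ l => l + p / l - (2 * χ / π) * arctan (min l (1 / √d) / δ)) hsqrt_p ?_ ?_
  · intro δ l hl
    have hamgm := two_sqrt_le_add_div hp.le hl
    have hretraction := mul_arctan_le hχ.le (min l (1 / √d) / δ)
    linarith
  · simp only [sqrt_add_div_sqrt p]
    exact tendsto_const_nhds.sub
      (tendsto_mul_arctan_div_nhdsGT_zero χ (lt_min hsqrt_p (by positivity)))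
end

section
/- Let d > 0 and let ρ : ℝ → ℝ be continuous and bounded, and define S(ξ) = (1/(2√d)) · ∫_{−∞}^{∞} e^{−|ξ−ζ|/√d} ρ(ζ) dζ. Then S is differentiable at 0 and S'(0) = (1/(2d)) · ∫_{0}^{∞} e^{−ζ/√d} (ρ(ζ) − ρ(−ζ)) dζ. -/
/-!
Differentiate under the integral sign. For ζ ≠ ξ the kernel `exp (-|ξ - ζ| / c)` is
differentiable in ξ with derivative `-sign (ξ - ζ) / c` times itself, and on the ball of radius
`r` around ξ₀ it is Lipschitz with constant `exp (r / c) * exp (-|ξ₀ - ζ| / c) / c`, which is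
integrable in ζ; multiplying by a bounded ρ keeps both facts. At ξ₀ = 0 the derivative carries
the odd weight `sign ζ`, and folding `(-∞, 0)` onto `(0, ∞)` gives the stated half-line integral,
with `1 / (2 √d) * 1 / √d = 1 / (2 d)`.
-/

open Real MeasureTheory Set
open scoped ENNReal

lemma integrable_exp_neg_abs_div {c : ℝ} (hc : 0 < c) :
    Integrable (fun x : ℝ => exp (-|x| / c)) := by
  rw [← integrableOn_univ, ← Iic_union_Ioi (a := 0)]
  refine ((integrableOn_exp_mul_Iic (inv_pos.2 hc) 0).congr_fun (fun x hx => ?_)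
    measurableSet_Iic).union
    ((integrableOn_exp_mul_Ioi (neg_lt_zero.2 (inv_pos.2 hc)) 0).congr_fun (fun x hx => ?_)
      measurableSet_Ioi)
  · rw [abs_of_nonpos hx]; ring_nf
  · rw [abs_of_pos hx]; ring_nf

lemma lipschitzOnWith_exp_Iic (a : ℝ) : LipschitzOnWith (exp a).toNNReal exp (Iic a) :=
  (convex_Iic a).lipschitzOnWith_of_nnnorm_hasDerivWithin_le
    (fun x _ => (hasDerivAt_exp x).hasDerivWithinAt) fun x hx => by
      rw [← NNReal.coe_le_coe, coe_nnnorm, coe_toNNReal _ (exp_pos a).le,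
        norm_of_nonneg (exp_pos x).le]
      exact exp_le_exp.2 hx

lemma lipschitzOnWith_exp_neg_abs_sub_div_mul {c : ℝ} (hc : 0 < c) (ζ x₀ r b : ℝ) :
    LipschitzOnWith (nnabs (exp (r / c) * exp (-|x₀ - ζ| / c) / c * b))
      (fun x => exp (-|x - ζ| / c) * b) (Metric.ball x₀ r) := by
  set u : ℝ → ℝ := fun x => -|x - ζ| / c
  have hu : MapsTo u (Metric.ball x₀ r) (Iic (r / c + -|x₀ - ζ| / c)) := fun x hx => by
    have hx' : |x - x₀| < r := hx
    have := abs_sub_le x₀ x ζ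
    rw [abs_sub_comm x₀ x] at this
    simp only [u, mem_Iic, ← add_div, div_le_div_iff_of_pos_right hc]
    linarith
  have hu_dist (x y : ℝ) : dist (u x) (u y) ≤ dist x y / c := by
    rw [dist_eq, dist_eq, ← sub_div, abs_div, abs_of_pos hc, neg_sub_neg]
    refine div_le_div_of_nonneg_right ((abs_abs_sub_abs_le_abs_sub _ _).trans_eq ?_) hc.le
    rw [sub_sub_sub_cancel_right, abs_sub_comm]
  refine LipschitzOnWith.of_dist_le_mul fun x hx y hy => ?_
  have hexp := (lipschitzOnWith_exp_Iic _).dist_le_mul _ (hu hx) _ (hu hy)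
  rw [coe_toNNReal _ (exp_pos _).le] at hexp
  calc dist (exp (u x) * b) (exp (u y) * b) = dist (exp (u x)) (exp (u y)) * |b| := by
        rw [dist_eq, dist_eq, ← sub_mul, abs_mul]
    _ ≤ exp (r / c + -|x₀ - ζ| / c) * (dist x y / c) * |b| := by
        gcongr
        exact hexp.trans (by gcongr; exact hu_dist x y)
    _ = _ := by
        rw [coe_nnabs, abs_mul, abs_div, abs_of_pos hc, abs_mul, abs_of_pos (exp_pos _),
          abs_of_pos (exp_pos _), exp_add]
        ring

lemma measurable_coe_sign : Measurable (fun x : ℝ => (SignType.sign x : ℝ)) := by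
  refine Monotone.measurable fun a b h => ?_
  rcases lt_trichotomy a 0 with ha | ha | ha <;> rcases lt_trichotomy b 0 with hb | hb | hb <;>
    simp [ha, hb] <;> linarith

lemma integral_sign_mul_eq_integral_Ioi_sub {g : ℝ → ℝ} (hg : Integrable g) :
    ∫ x, SignType.sign x * g x = ∫ x in Ioi 0, (g x - g (-x)) := by
  have hsg : Integrable (fun x => SignType.sign x * g x) :=
    hg.bdd_mul measurable_coe_sign.aestronglyMeasurable (c := 1) (ae_of_all _ fun x => by
      rcases lt_trichotomy x 0 with hx | hx | hx <;> simp [hx])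
  have hneg : ∫ x in Iic 0, SignType.sign x * g x = -∫ x in Ioi 0, g (-x) := by
    rw [integral_comp_neg_Ioi, neg_zero, ← integral_neg, ← setIntegral_congr_set Iio_ae_eq_Iic,
      ← setIntegral_congr_set Iio_ae_eq_Iic]
    exact setIntegral_congr_fun measurableSet_Iio fun x (hx : x < 0) => by simp [hx]
  have hpos : ∫ x in Ioi 0, SignType.sign x * g x = ∫ x in Ioi 0, g x :=
    setIntegral_congr_fun measurableSet_Ioi fun x (hx : 0 < x) => by simp [hx]
  rw [← intervalIntegral.integral_Iic_add_Ioi hsg.integrableOn hsg.integrableOn, hneg, hpos,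
    integral_sub hg.integrableOn (hg.comp_neg).integrableOn]
  ring

lemma hasDerivAt_exp_neg_abs_sub_div {c ζ x₀ : ℝ} (h : x₀ ≠ ζ) :
    HasDerivAt (fun x => exp (-|x - ζ| / c))
      (exp (-|x₀ - ζ| / c) * (-SignType.sign (x₀ - ζ) / c)) x₀ :=
  ((hasDerivAt_abs (sub_ne_zero.2 h)).comp_sub_const x₀ ζ).neg.div_const c |>.exp

theorem hasDerivAt_integral_exp_neg_abs_sub_mul {c : ℝ} (hc : 0 < c) {ρ : ℝ → ℝ}
    (hρ : MemLp ρ ∞) (x₀ : ℝ) :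
    HasDerivAt (fun x => ∫ ζ, exp (-|x - ζ| / c) * ρ ζ)
      (∫ ζ, exp (-|x₀ - ζ| / c) * (-SignType.sign (x₀ - ζ) / c) * ρ ζ) x₀ := by
  have hkernel : Integrable (fun ζ => exp (-|x₀ - ζ| / c)) :=
    (integrable_exp_neg_abs_div hc).comp_sub_left x₀
  have hF_meas : ∀ᶠ x in nhds x₀, AEStronglyMeasurable (fun ζ => exp (-|x - ζ| / c) * ρ ζ) :=
    .of_forall fun x =>
      (by fun_prop : Continuous fun ζ => exp (-|x - ζ| / c)).aestronglyMeasurable.mul hρ.1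
  have hF'_meas : AEStronglyMeasurable
      (fun ζ => exp (-|x₀ - ζ| / c) * (-SignType.sign (x₀ - ζ) / c) * ρ ζ) := by
    have hsign : Measurable fun ζ => (SignType.sign (x₀ - ζ) : ℝ) :=
      measurable_coe_sign.comp (measurable_const.sub measurable_id)
    exact (by fun_prop :
      Measurable fun ζ => exp (-|x₀ - ζ| / c) * (-SignType.sign (x₀ - ζ) / c))
        |>.aestronglyMeasurable.mul hρ.1
  have h_diff : ∀ᵐ ζ, HasDerivAt (fun x => exp (-|x - ζ| / c) * ρ ζ)
      (exp (-|x₀ - ζ| / c) * (-SignType.sign (x₀ - ζ) / c) * ρ ζ) x₀ := by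
    filter_upwards [volume.ae_ne x₀] with ζ hζ
    exact (hasDerivAt_exp_neg_abs_sub_div hζ.symm).mul_const (ρ ζ)
  exact (hasDerivAt_integral_of_dominated_loc_of_lip (Metric.ball_mem_nhds x₀ hc) hF_meas
    (hkernel.mul_of_top_left hρ) hF'_meas
    (.of_forall fun ζ => lipschitzOnWith_exp_neg_abs_sub_div_mul hc ζ x₀ c (ρ ζ))
    (((hkernel.const_mul (exp (c / c))).div_const c).mul_of_top_left hρ) h_diff).2

theorem green_function_derivative_at_zero (d : ℝ) (hd : 0 < d) (ρ : ℝ → ℝ)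
    (hcont : Continuous ρ) (hbdd : ∃ M : ℝ, ∀ x, |ρ x| ≤ M) :
    HasDerivAt
      (fun ξ => (1 / (2 * sqrt d)) * ∫ ζ : ℝ, exp (-|ξ - ζ| / sqrt d) * ρ ζ)
      ((1 / (2 * d)) * ∫ ζ in Set.Ioi (0 : ℝ), exp (-ζ / sqrt d) * (ρ ζ - ρ (-ζ)))
      0 := by
  obtain ⟨M, hM⟩ := hbdd
  have hρ : MemLp ρ ∞ := memLp_top_of_bound hcont.aestronglyMeasurable M (.of_forall hM)
  have hc : 0 < √d := sqrt_pos.2 hd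
  have hderiv := (hasDerivAt_integral_exp_neg_abs_sub_mul hc hρ 0).const_mul (1 / (2 * √d))
  refine hderiv.congr_deriv ?_
  have hodd : ∫ ζ, exp (-|0 - ζ| / √d) * (-SignType.sign (0 - ζ) / √d) * ρ ζ
      = 1 / √d * ∫ ζ, SignType.sign ζ * (exp (-|ζ| / √d) * ρ ζ) := by
    rw [← integral_const_mul]
    congr 1 with ζ
    rw [zero_sub, abs_neg, Left.sign_neg, SignType.coe_neg]
    ring
  have hg : Integrable fun ζ => exp (-|ζ| / √d) * ρ ζ :=
    (integrable_exp_neg_abs_div hc).mul_of_top_left hρ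
  rw [hodd, integral_sign_mul_eq_integral_Ioi_sub hg,
    ← mul_assoc, one_div_mul_one_div, mul_assoc, mul_self_sqrt hd.le]
  congr 1
  refine setIntegral_congr_fun measurableSet_Ioi fun ζ (hζ : 0 < ζ) => ?_
  rw [abs_neg, abs_of_pos hζ]
  ring
end

section
/- Let d > 0 and λ > 0 with λ·√d ≠ 1. Define ρ : ℝ → ℝ by ρ(ζ) = e^{−λζ} for ζ ≥ 0 and ρ(ζ) = 1 for ζ < 0, and define S(ξ) = (1/(2√d)) · ∫_{−∞}^{∞} e^{−|ξ−ζ|/√d} ρ(ζ) dζ. Then e^{min(λ, 1/√d)·ξ} · S(ξ) converges to a finite positive limit as ξ → +∞; in particular S decays at +∞ with exponential rate exactly min(λ, 1/√d). -/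
open Real MeasureTheory Filter Set

/-! For `ξ ≥ 0` the convolution splits at `0` and `ξ` into three pure exponential integrals, so
`S ξ` is an explicit combination `A e^{-ξ/√d} + B e^{-λξ}`. The slower exponential dominates, and its
coefficient is positive: `A > 0` when `1/√d < λ`, `B > 0` when `λ < 1/√d`. -/

lemma integral_exp_mul_of_ne_zero {c : ℝ} (hc : c ≠ 0) (a b : ℝ) :
    ∫ x in a..b, exp (c * x) = (exp (c * b) - exp (c * a)) / c := by
  rw [intervalIntegral.integral_comp_mul_left (fun x => exp x) hc, integral_exp, smul_eq_mul]
  field_simp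

noncomputable def frontDensity (lam ζ : ℝ) : ℝ := if 0 ≤ ζ then exp (-lam * ζ) else 1

section Convolution

variable {μ lam ξ : ℝ}

lemma eqOn_Iic_exp_neg_abs_mul_frontDensity (hξ : 0 ≤ ξ) :
    EqOn (fun ζ => exp (-μ * |ξ - ζ|) * frontDensity lam ζ)
      (fun ζ => exp (-μ * ξ) * exp (μ * ζ)) (Iic 0) := by
  intro ζ (hζ : ζ ≤ 0)
  have hρ : frontDensity lam ζ = 1 := by
    rcases hζ.lt_or_eq with hneg | rfl
    · simp [frontDensity, hneg]
    · simp [frontDensity]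
  simp only [hρ, abs_of_nonneg (by linarith : 0 ≤ ξ - ζ), mul_one, ← exp_add]
  ring_nf

lemma eqOn_Ioc_exp_neg_abs_mul_frontDensity :
    EqOn (fun ζ => exp (-μ * |ξ - ζ|) * frontDensity lam ζ)
      (fun ζ => exp (-μ * ξ) * exp ((μ - lam) * ζ)) (Ioc 0 ξ) := by
  rintro ζ ⟨hζ₀, hζξ⟩
  simp only [frontDensity, if_pos hζ₀.le, abs_of_nonneg (sub_nonneg.2 hζξ), ← exp_add]
  ring_nf

lemma eqOn_Ioi_exp_neg_abs_mul_frontDensity (hξ : 0 ≤ ξ) :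
    EqOn (fun ζ => exp (-μ * |ξ - ζ|) * frontDensity lam ζ)
      (fun ζ => exp (μ * ξ) * exp (-(μ + lam) * ζ)) (Ioi ξ) := by
  intro ζ (hζ : ξ < ζ)
  simp only [frontDensity, if_pos (hξ.trans hζ.le), abs_sub_comm ξ,
    abs_of_pos (sub_pos.2 hζ), ← exp_add]
  ring_nf

lemma integral_exp_neg_abs_mul_frontDensity (hμ : 0 < μ) (hμlam : 0 < μ + lam)
    (hne : μ ≠ lam) (hξ : 0 ≤ ξ) :
    ∫ ζ, exp (-μ * |ξ - ζ|) * frontDensity lam ζ =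
      (1 / μ - 1 / (μ - lam)) * exp (-μ * ξ) + (1 / (μ - lam) + 1 / (μ + lam)) * exp (-lam * ξ) := by
  set f := fun ζ => exp (-μ * |ξ - ζ|) * frontDensity lam ζ
  have eq_Iic := eqOn_Iic_exp_neg_abs_mul_frontDensity (μ := μ) (lam := lam) hξ
  have eq_Ioc := eqOn_Ioc_exp_neg_abs_mul_frontDensity (μ := μ) (lam := lam) (ξ := ξ)
  have eq_Ioi := eqOn_Ioi_exp_neg_abs_mul_frontDensity (μ := μ) (lam := lam) hξ
  have int_Iic : IntegrableOn f (Iic 0) :=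
    IntegrableOn.congr_fun ((integrableOn_exp_mul_Iic hμ 0).const_mul _) eq_Iic.symm
      measurableSet_Iic
  have int_Ioc : IntegrableOn f (Ioc 0 ξ) :=
    (Continuous.integrableOn_Ioc (by fun_prop)).congr_fun eq_Ioc.symm measurableSet_Ioc
  have int_Ioi : IntegrableOn f (Ioi ξ) :=
    IntegrableOn.congr_fun ((integrableOn_exp_mul_Ioi (neg_lt_zero.2 hμlam) ξ).const_mul _)
      eq_Ioi.symm measurableSet_Ioi
  have split_Ioi : ∫ ζ in Ioi 0, f ζ = (∫ ζ in Ioc 0 ξ, f ζ) + ∫ ζ in Ioi ξ, f ζ := by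
    rw [← setIntegral_union Ioc_disjoint_Ioi_same measurableSet_Ioi int_Ioc int_Ioi,
      Ioc_union_Ioi_eq_Ioi hξ]
  rw [← intervalIntegral.integral_Iic_add_Ioi int_Iic
      (Ioc_union_Ioi_eq_Ioi hξ ▸ int_Ioc.union int_Ioi), split_Ioi,
    setIntegral_congr_fun measurableSet_Iic eq_Iic, setIntegral_congr_fun measurableSet_Ioc eq_Ioc,
    setIntegral_congr_fun measurableSet_Ioi eq_Ioi, integral_const_mul, integral_const_mul,
    integral_const_mul, integral_exp_mul_Iic hμ, ← intervalIntegral.integral_of_le hξ,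
    integral_exp_mul_of_ne_zero (sub_ne_zero.2 hne), integral_exp_mul_Ioi (neg_lt_zero.2 hμlam)]
  have hIoc : exp (-μ * ξ) * exp ((μ - lam) * ξ) = exp (-lam * ξ) := by
    rw [← exp_add]; ring_nf
  have hIoi : exp (μ * ξ) * exp (-(μ + lam) * ξ) = exp (-lam * ξ) := by
    rw [← exp_add]; ring_nf
  rw [mul_zero, mul_zero, exp_zero, neg_div_neg_eq]
  linear_combination hIoc / (μ - lam) + hIoi / (μ + lam)

end Convolution

lemma tendsto_exp_mul_mul_add_exp {A B a b : ℝ} (hab : a < b) :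
    Tendsto (fun ξ => exp (a * ξ) * (A * exp (-a * ξ) + B * exp (-b * ξ))) atTop (nhds A) := by
  have hdecay : Tendsto (fun ξ => exp ((a - b) * ξ)) atTop (nhds 0) :=
    tendsto_exp_atBot.comp (tendsto_id.const_mul_atTop_of_neg (sub_neg.2 hab))
  convert tendsto_const_nhds.add (hdecay.const_mul B) using 1
  · ext ξ
    rw [mul_add, mul_left_comm, ← exp_add, mul_left_comm, ← exp_add]
    ring_nf
    simp
  · simp

lemma exists_pos_tendsto_exp_min_mul_add_exp {A B a b : ℝ} (hab : a ≠ b)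
    (hA : a < b → 0 < A) (hB : b < a → 0 < B) :
    ∃ L, 0 < L ∧
      Tendsto (fun ξ => exp (min b a * ξ) * (A * exp (-a * ξ) + B * exp (-b * ξ))) atTop
        (nhds L) := by
  rcases hab.lt_or_gt with hlt | hgt
  · exact ⟨A, hA hlt, by simpa [min_eq_right hlt.le] using tendsto_exp_mul_mul_add_exp hlt⟩
  · refine ⟨B, hB hgt, ?_⟩
    simpa [min_eq_left hgt.le, add_comm] using tendsto_exp_mul_mul_add_exp (A := B) (B := A) hgt

theorem chemoattractant_decay_rate (d lam : ℝ) (hd : 0 < d) (hlam : 0 < lam)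
    (hne : lam * sqrt d ≠ 1) :
    let ρ : ℝ → ℝ := fun ζ => if 0 ≤ ζ then exp (-lam * ζ) else 1
    let S : ℝ → ℝ := fun ξ =>
      (1 / (2 * sqrt d)) * ∫ ζ : ℝ, exp (-|ξ - ζ| / sqrt d) * ρ ζ
    ∃ L : ℝ, 0 < L ∧
      Tendsto (fun ξ => exp (min lam (1 / sqrt d) * ξ) * S ξ) atTop (nhds L) := by
  intro ρ S
  have hs : 0 < sqrt d := sqrt_pos.2 hd
  set μ := 1 / sqrt d
  have hμ : 0 < μ := by positivity
  have hμlam : μ ≠ lam := fun h => hne (h ▸ one_div_mul_cancel hs.ne')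
  obtain ⟨L, hL, hlim⟩ := exists_pos_tendsto_exp_min_mul_add_exp
    (A := 1 / μ - 1 / (μ - lam)) (B := 1 / (μ - lam) + 1 / (μ + lam)) hμlam
    (fun h => sub_pos.2 ((one_div_neg.2 (sub_neg.2 h)).trans (one_div_pos.2 hμ)))
    (fun h => add_pos (one_div_pos.2 (sub_pos.2 h)) (one_div_pos.2 (add_pos hμ hlam)))
  refine ⟨1 / (2 * sqrt d) * L, by positivity, (hlim.const_mul _).congr' ?_⟩
  filter_upwards [eventually_ge_atTop 0] with ξ hξ
  have hkernel : ∀ ζ, exp (-|ξ - ζ| / sqrt d) * ρ ζ = exp (-μ * |ξ - ζ|) * frontDensity lam ζ :=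
    fun ζ => by rw [show -|ξ - ζ| / sqrt d = -μ * |ξ - ζ| by ring]; rfl
  simp only [S, hkernel, integral_exp_neg_abs_mul_frontDensity hμ (add_pos hμ hlam) hμlam hξ]
  ring
end

section
/- Let t ∈ (0, 1) and χ̂ > 0, define μ± = χ̂ − √(χ̂² − 2χ̂ + 1/t²) ± 1/t and g(s, t) = μ₊s²t(1 + t − t²) − μ₋t(1 − t − t²) − 4χ̂·s^{1+t} for s ∈ (0, 1). Then g(s, t) → −μ₋·t·(1 − t − t²) as s → 0⁺, and this limit is positive if and only if t < (√5 − 1)/2. Moreover, for p > 0 with t = √(p/(1+p)), one has t < (√5 − 1)/2 if and only if p < (√5 − 1)/2. -/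
/-! The bound comes from the factor `1 - t - t²` of the limit `-μ₋ t (1 - t - t²)`: since
`μ₋ ≤ 1 - 1/t < 0`, the limit is positive exactly when `t` lies below the positive root
`c = (√5 - 1)/2` of `1 - t - t²`. As `c² = 1 - c`, the substitution `t² = p/(1+p)` turns
`t < c` into `c p < c²`, i.e. `p < c`. -/

open Real Filter

lemma sq_sqrt_five_sub_one_div_two : ((√5 - 1) / 2) ^ 2 = 1 - (√5 - 1) / 2 := by
  have h5 : √5 ^ 2 = 5 := sq_sqrt (by norm_num)
  linear_combination h5 / 4

lemma sqrt_five_sub_one_div_two_pos : 0 < (√5 - 1) / 2 := by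
  have : (1 : ℝ) < √5 := by
    rw [lt_sqrt zero_le_one]; norm_num
  linarith

lemma one_sub_sub_sq_pos_iff {t : ℝ} (ht : 0 ≤ t) :
    0 < 1 - t - t ^ 2 ↔ t < (√5 - 1) / 2 := by
  have hfactor : 1 - t - t ^ 2 = ((√5 - 1) / 2 - t) * (t + 1 + (√5 - 1) / 2) := by
    linear_combination -sq_sqrt_five_sub_one_div_two
  have hc : 0 < t + 1 + (√5 - 1) / 2 := by linarith [sqrt_five_sub_one_div_two_pos]
  rw [hfactor, mul_pos_iff_of_pos_right hc, sub_pos]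

lemma sqrt_div_one_add_lt_iff {p : ℝ} (hp : 0 ≤ p) :
    √(p / (1 + p)) < (√5 - 1) / 2 ↔ p < (√5 - 1) / 2 := by
  have hc := sqrt_five_sub_one_div_two_pos
  rw [sqrt_lt' hc, div_lt_iff₀ (by linarith)]
  constructor <;> intro h <;> nlinarith [sq_sqrt_five_sub_one_div_two]

lemma sub_one_le_sqrt_sq_sub_two_mul_add {a : ℝ} (ha : 1 ≤ a) (χ : ℝ) :
    χ - 1 ≤ √(χ ^ 2 - 2 * χ + a) := by
  calc χ - 1 ≤ |χ - 1| := le_abs_self _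
    _ = √((χ - 1) ^ 2) := (sqrt_sq_eq_abs _).symm
    _ ≤ √(χ ^ 2 - 2 * χ + a) := sqrt_le_sqrt (by nlinarith)

lemma sub_sqrt_sub_inv_neg {t : ℝ} (ht0 : 0 < t) (ht1 : t < 1) (χ : ℝ) :
    χ - √(χ ^ 2 - 2 * χ + 1 / t ^ 2) - 1 / t < 0 := by
  have hinv : 1 < 1 / t := by rw [lt_div_iff₀ ht0]; linarith
  have hinv_sq : 1 ≤ 1 / t ^ 2 := by
    rw [one_div, ← inv_pow, ← one_div]; exact one_le_pow₀ hinv.le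
  linarith [sub_one_le_sqrt_sq_sub_two_mul_add hinv_sq χ]

theorem g_limit_and_upper_bound_general (t χ : ℝ)
    (ht : t ∈ Set.Ioo (0 : ℝ) 1) :
    let μp : ℝ := χ - sqrt (χ ^ 2 - 2 * χ + 1 / t ^ 2) + 1 / t
    let μm : ℝ := χ - sqrt (χ ^ 2 - 2 * χ + 1 / t ^ 2) - 1 / t
    Tendsto
      (fun s : ℝ => μp * s ^ 2 * t * (1 + t - t ^ 2) - μm * t * (1 - t - t ^ 2)
        - 4 * χ * s ^ (1 + t))
      (nhdsWithin 0 (Set.Ioi 0))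
      (nhds (-μm * t * (1 - t - t ^ 2)))
    ∧ (0 < -μm * t * (1 - t - t ^ 2) ↔ t < (sqrt 5 - 1) / 2)
    ∧ (∀ p : ℝ, 0 < p → t = sqrt (p / (1 + p)) →
        (t < (sqrt 5 - 1) / 2 ↔ p < (sqrt 5 - 1) / 2)) := by
  obtain ⟨ht0, ht1⟩ := ht
  intro μp μm
  refine ⟨?_, ?_, fun p hp htp => htp ▸ sqrt_div_one_add_lt_iff hp.le⟩
  · have hcont : Continuous fun s : ℝ => μp * s ^ 2 * t * (1 + t - t ^ 2)
        - μm * t * (1 - t - t ^ 2) - 4 * χ * s ^ (1 + t) := by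
      fun_prop (disch := linarith)
    convert (hcont.tendsto 0).mono_left nhdsWithin_le_nhds using 2
    simp [zero_rpow (by linarith : 1 + t ≠ 0)]
  · have hμm_t : 0 < -μm * t := mul_pos (neg_pos.2 (sub_sqrt_sub_inv_neg ht0 ht1 χ)) ht0
    rw [mul_pos_iff_of_pos_left hμm_t, one_sub_sub_sq_pos_iff ht0.le]

theorem g_limit_and_upper_bound (t χ : ℝ)
    (ht : t ∈ Set.Ioo (0 : ℝ) 1) (hχ : 0 < χ) :
    let μp : ℝ := χ - sqrt (χ ^ 2 - 2 * χ + 1 / t ^ 2) + 1 / t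
    let μm : ℝ := χ - sqrt (χ ^ 2 - 2 * χ + 1 / t ^ 2) - 1 / t
    Tendsto
      (fun s : ℝ => μp * s ^ 2 * t * (1 + t - t ^ 2) - μm * t * (1 - t - t ^ 2)
        - 4 * χ * s ^ (1 + t))
      (nhdsWithin 0 (Set.Ioi 0))
      (nhds (-μm * t * (1 - t - t ^ 2)))
    ∧ (0 < -μm * t * (1 - t - t ^ 2) ↔ t < (sqrt 5 - 1) / 2)
    ∧ (∀ p : ℝ, 0 < p → t = sqrt (p / (1 + p)) →
        (t < (sqrt 5 - 1) / 2 ↔ p < (sqrt 5 - 1) / 2)) :=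
  g_limit_and_upper_bound_general t χ ht
end
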